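/- Strict n-tuple consequence coincides with K3 consequence: for all sets of sentences Γ ∪ {A}, Γ ⊨_{n,s} A if and only if Γ ⊨_k A. -/

import Mathlib

/-- Helper instance so that instance search for the lexicographic order does not get stuck. -/
instance (n : ℕ) : WellFoundedLT (Fin n) := inferInstance

/-- `2^n`: the `n`-fold product of the two-element Boolean algebra `2 = {0,1}` (as `Bool`,
with `false = 0`, `true = 1`), carrying the lexicographic order. -/
abbrev Tup (n : ℕ) := Lex (Fin n → Bool)

/-- The componentwise complement `-⟨x₁,…,xₙ⟩ = ⟨1-x₁,…,1-xₙ⟩` on `2^n`. -/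
def tneg {n : ℕ} (x : Tup n) : Tup n := toLex fun i => !(ofLex x i)

/-- The top value `⟨1,…,1⟩` of `2^n`. -/
def tTop (n : ℕ) : Tup n := toLex fun _ => true

/-- The bottom value `⟨0,…,0⟩` of `2^n`. -/
def tBot (n : ℕ) : Tup n := toLex fun _ => false

/-- The three truth values `f < i < t` (i.e. `0 < 1/2 < 1`). -/
inductive V3 where
  | f | i | t
deriving DecidableEq

instance : Fintype V3 where
  elems := {V3.f, V3.i, V3.t}
  complete := fun x => by cases x <;> simp

def V3.toFin : V3 → Fin 3
  | .f => 0 | .i => 1 | .t => 2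

instance : LinearOrder V3 := LinearOrder.lift' V3.toFin (by decide)

/-- Three-valued negation: `1 - x`. -/
def V3.negv : V3 → V3
  | .t => .f | .i => .i | .f => .t

instance (n : ℕ) : Fintype (Tup n) := Fintype.ofEquiv _ toLex
instance (n : ℕ) : Nonempty (Tup n) := ⟨tBot n⟩
noncomputable instance (n : ℕ) : CompleteLinearOrder (Tup n) :=
  Fintype.toCompleteLinearOrder _
instance : Nonempty V3 := ⟨V3.t⟩
noncomputable instance : CompleteLinearOrder V3 :=
  Fintype.toCompleteLinearOrderOfNonempty _

/-- Terms of a first-order language: variables and constant symbols. -/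
inductive Term (Const : Type) where
  | var : ℕ → Term Const
  | const : Const → Term Const

/-- First-order formulas over predicate symbols `Pred` (with arities `ar`),
constants `Const`, and the connectives `¬, ∧, ∨, ∀, ∃`. -/
inductive FForm (Pred Const : Type) (ar : Pred → ℕ) where
  | atom : (P : Pred) → (Fin (ar P) → Term Const) → FForm Pred Const ar
  | neg : FForm Pred Const ar → FForm Pred Const ar
  | conj : FForm Pred Const ar → FForm Pred Const ar → FForm Pred Const ar
  | disj : FForm Pred Const ar → FForm Pred Const ar → FForm Pred Const ar
  | all : ℕ → FForm Pred Const ar → FForm Pred Const ar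
  | ex : ℕ → FForm Pred Const ar → FForm Pred Const ar

/-- Evaluation of terms, given interpretations of the constants and an assignment. -/
def Term.evalt {Const D : Type} (cv : Const → D) (σ : ℕ → D) : Term Const → D
  | .var x => σ x
  | .const c => cv c

/-- The Clemens valuation over `2^n`: componentwise complement for `¬`, lexicographic
min/max for `∧`/`∨`, and inf/sup over the domain for the quantifiers. -/
noncomputable def fevalT {Pred Const : Type} {ar : Pred → ℕ} {n : ℕ} {D : Type}
    (cv : Const → D) (pv : (P : Pred) → (Fin (ar P) → D) → Tup n) (σ : ℕ → D) :
    FForm Pred Const ar → Tup n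
  | .atom P ts => pv P fun j => (ts j).evalt cv σ
  | .neg A => tneg (fevalT cv pv σ A)
  | .conj A B => min (fevalT cv pv σ A) (fevalT cv pv σ B)
  | .disj A B => max (fevalT cv pv σ A) (fevalT cv pv σ B)
  | .all x A => ⨅ d : D, fevalT cv pv (Function.update σ x d) A
  | .ex x A => ⨆ d : D, fevalT cv pv (Function.update σ x d) A

/-- The three-valued (strong Kleene / LP) valuation over `{0, 1/2, 1}`: `1 - x` for `¬`,
min/max for `∧`/`∨`, and inf/sup over the domain for the quantifiers. -/
noncomputable def feval3 {Pred Const : Type} {ar : Pred → ℕ} {D : Type}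
    (cv : Const → D) (pv : (P : Pred) → (Fin (ar P) → D) → V3) (σ : ℕ → D) :
    FForm Pred Const ar → V3
  | .atom P ts => pv P fun j => (ts j).evalt cv σ
  | .neg A => (feval3 cv pv σ A).negv
  | .conj A B => min (feval3 cv pv σ A) (feval3 cv pv σ B)
  | .disj A B => max (feval3 cv pv σ A) (feval3 cv pv σ B)
  | .all x A => ⨅ d : D, feval3 cv pv (Function.update σ x d) A
  | .ex x A => ⨆ d : D, feval3 cv pv (Function.update σ x d) A

/-- Strict consequence `Γ ⊨_{n,s} A`: in every Clemens interpretation (with nonempty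
domain) and assignment, if every premise takes the value `⟨1,…,1⟩`, so does `A`. -/
def ConseqS (n : ℕ) (Pred Const : Type) (ar : Pred → ℕ)
    (Γ : Set (FForm Pred Const ar)) (A : FForm Pred Const ar) : Prop :=
  ∀ (D : Type) (_ : Nonempty D) (cv : Const → D)
    (pv : (P : Pred) → (Fin (ar P) → D) → Tup n) (σ : ℕ → D),
    (∀ B ∈ Γ, fevalT cv pv σ B = tTop n) → fevalT cv pv σ A = tTop n

/-- Tolerant consequence `Γ ⊨_{n,t} A`: preservation of values `≠ ⟨0,…,0⟩`. -/
def ConseqT (n : ℕ) (Pred Const : Type) (ar : Pred → ℕ)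
    (Γ : Set (FForm Pred Const ar)) (A : FForm Pred Const ar) : Prop :=
  ∀ (D : Type) (_ : Nonempty D) (cv : Const → D)
    (pv : (P : Pred) → (Fin (ar P) → D) → Tup n) (σ : ℕ → D),
    (∀ B ∈ Γ, fevalT cv pv σ B ≠ tBot n) → fevalT cv pv σ A ≠ tBot n

/-- Strict-tolerant consequence `Γ ⊨_{n,s,t} A`: if all premises take value `⟨1,…,1⟩`,
the conclusion takes a value `≠ ⟨0,…,0⟩`. -/
def ConseqNST (n : ℕ) (Pred Const : Type) (ar : Pred → ℕ)
    (Γ : Set (FForm Pred Const ar)) (A : FForm Pred Const ar) : Prop :=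
  ∀ (D : Type) (_ : Nonempty D) (cv : Const → D)
    (pv : (P : Pred) → (Fin (ar P) → D) → Tup n) (σ : ℕ → D),
    (∀ B ∈ Γ, fevalT cv pv σ B = tTop n) → fevalT cv pv σ A ≠ tBot n

/-- K3 consequence `Γ ⊨_k A`: preservation of the value `1` in all three-valued
(strong Kleene) interpretations. -/
def ConseqK (Pred Const : Type) (ar : Pred → ℕ)
    (Γ : Set (FForm Pred Const ar)) (A : FForm Pred Const ar) : Prop :=
  ∀ (D : Type) (_ : Nonempty D) (cv : Const → D)
    (pv : (P : Pred) → (Fin (ar P) → D) → V3) (σ : ℕ → D),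
    (∀ B ∈ Γ, feval3 cv pv σ B = V3.t) → feval3 cv pv σ A = V3.t

/-- LP consequence `Γ ⊨_l A`: preservation of the designated values `{1, 1/2}`. -/
def ConseqL (Pred Const : Type) (ar : Pred → ℕ)
    (Γ : Set (FForm Pred Const ar)) (A : FForm Pred Const ar) : Prop :=
  ∀ (D : Type) (_ : Nonempty D) (cv : Const → D)
    (pv : (P : Pred) → (Fin (ar P) → D) → V3) (σ : ℕ → D),
    (∀ B ∈ Γ, feval3 cv pv σ B ∈ ({V3.t, V3.i} : Set V3)) →
      feval3 cv pv σ A ∈ ({V3.t, V3.i} : Set V3)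

/-- ST consequence `Γ ⊨_st A`: if all premises take value `1`, the conclusion takes a
value in `{1, 1/2}`. -/
def ConseqST (Pred Const : Type) (ar : Pred → ℕ)
    (Γ : Set (FForm Pred Const ar)) (A : FForm Pred Const ar) : Prop :=
  ∀ (D : Type) (_ : Nonempty D) (cv : Const → D)
    (pv : (P : Pred) → (Fin (ar P) → D) → V3) (σ : ℕ → D),
    (∀ B ∈ Γ, feval3 cv pv σ B = V3.t) → feval3 cv pv σ A ∈ ({V3.t, V3.i} : Set V3)


/-!
Collapsing `2^n` onto `{0, 1/2, 1}` by sending `⟨1,…,1⟩` to `1`, `⟨0,…,0⟩` to `0` and every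
other tuple to `1/2` is monotone and commutes with complement, so it carries each Clemens
valuation to a strong Kleene valuation in which exactly the same formulas take the value `1`.
For `n ≥ 2` the collapse is surjective, so every strong Kleene interpretation arises this way.
-/

theorem Monotone.map_iInf_of_wellFoundedLT {α β ι : Type*} [CompleteLinearOrder α]
    [CompleteLinearOrder β] [WellFoundedLT α] [Nonempty ι] {g : α → β} (hg : Monotone g)
    (f : ι → α) : g (⨅ i, f i) = ⨅ i, g (f i) := by
  obtain ⟨i₀, hi₀⟩ := ciInf_mem f
  rw [← hi₀]
  exact le_antisymm (le_iInf fun i => hg (hi₀ ▸ iInf_le f i)) (iInf_le _ i₀)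

theorem Monotone.map_iSup_of_wellFoundedGT {α β ι : Type*} [CompleteLinearOrder α]
    [CompleteLinearOrder β] [WellFoundedGT α] [Nonempty ι] {g : α → β} (hg : Monotone g)
    (f : ι → α) : g (⨆ i, f i) = ⨆ i, g (f i) :=
  hg.dual.map_iInf_of_wellFoundedLT (α := αᵒᵈ) f

section Tup

variable {n : ℕ}

theorem tBot_le (x : Tup n) : tBot n ≤ x :=
  Pi.toLex_monotone fun _ => Bool.false_le _

theorem le_tTop (x : Tup n) : x ≤ tTop n :=
  Pi.toLex_monotone fun _ => Bool.le_true _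

theorem tTop_ne_tBot (hn : 0 < n) : tTop n ≠ tBot n :=
  fun h => Bool.noConfusion (congrFun h ⟨0, hn⟩)

theorem tneg_involutive : Function.Involutive (tneg (n := n)) :=
  fun x => funext fun i => Bool.not_not (x i)

theorem tneg_tTop : tneg (tTop n) = tBot n := rfl

theorem tneg_tBot : tneg (tBot n) = tTop n := rfl

theorem tneg_eq_tBot_iff {x : Tup n} : tneg x = tBot n ↔ x = tTop n :=
  tneg_involutive.injective.eq_iff' tneg_tTop

theorem tneg_eq_tTop_iff {x : Tup n} : tneg x = tTop n ↔ x = tBot n :=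
  tneg_involutive.injective.eq_iff' tneg_tBot

open scoped Classical in
noncomputable def Tup.toV3 (x : Tup n) : V3 :=
  if x = tTop n then .t else if x = tBot n then .f else .i

theorem Tup.toV3_tTop : Tup.toV3 (tTop n) = .t := if_pos rfl

theorem Tup.toV3_tBot (hn : 0 < n) : Tup.toV3 (tBot n) = .f := by
  rw [Tup.toV3, if_neg (tTop_ne_tBot hn).symm, if_pos rfl]

theorem Tup.toV3_of_ne {x : Tup n} (hTop : x ≠ tTop n) (hBot : x ≠ tBot n) :
    Tup.toV3 x = .i := by
  rw [Tup.toV3, if_neg hTop, if_neg hBot]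

theorem Tup.toV3_eq_t_iff {x : Tup n} : Tup.toV3 x = .t ↔ x = tTop n := by
  unfold Tup.toV3
  split_ifs <;> simp_all

theorem Tup.toV3_tneg (hn : 0 < n) (x : Tup n) : Tup.toV3 (tneg x) = (Tup.toV3 x).negv := by
  by_cases hTop : x = tTop n
  · rw [hTop, tneg_tTop, Tup.toV3_tBot hn, Tup.toV3_tTop]; rfl
  by_cases hBot : x = tBot n
  · rw [hBot, tneg_tBot, Tup.toV3_tBot hn, Tup.toV3_tTop]; rfl
  rw [Tup.toV3_of_ne hTop hBot,
    Tup.toV3_of_ne (tneg_eq_tTop_iff.not.2 hBot) (tneg_eq_tBot_iff.not.2 hTop)]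
  rfl

theorem Tup.monotone_toV3 : Monotone (Tup.toV3 (n := n)) := by
  intro x y hxy
  by_cases hTop : x = tTop n
  · rw [hTop] at hxy ⊢
    rw [le_antisymm (le_tTop y) hxy]
  by_cases hBot : x = tBot n
  · simp only [Tup.toV3, if_neg hTop, if_pos hBot]
    split_ifs <;> decide
  have hy : y ≠ tBot n := fun h => hBot (le_antisymm (h ▸ hxy) (tBot_le x))
  simp only [Tup.toV3, if_neg hTop, if_neg hBot, if_neg hy]
  split_ifs <;> decide

def V3.toTup (n : ℕ) : V3 → Tup n
  | .t => tTop n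
  | .f => tBot n
  | .i => toLex fun j => decide (j.val ≠ 0)

theorem Tup.toV3_toTup (hn : 2 ≤ n) (v : V3) : Tup.toV3 (v.toTup n) = v := by
  cases v with
  | t => exact Tup.toV3_tTop
  | f => exact Tup.toV3_tBot (by omega)
  | i =>
    refine Tup.toV3_of_ne (fun h => ?_) (fun h => ?_)
    · simpa [V3.toTup, tTop] using congrFun h ⟨0, by omega⟩
    · simpa [V3.toTup, tBot] using congrFun h ⟨1, by omega⟩

end Tup

section Collapse

variable {Pred Const : Type} {ar : Pred → ℕ} {n : ℕ}

theorem feval3_toV3 (hn : 0 < n) {D : Type} [Nonempty D] (cv : Const → D)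
    (pv : (P : Pred) → (Fin (ar P) → D) → Tup n) (σ : ℕ → D) (A : FForm Pred Const ar) :
    feval3 cv (fun P v => Tup.toV3 (pv P v)) σ A = Tup.toV3 (fevalT cv pv σ A) := by
  -- The quantifier clauses of `fevalT` use the `⨅`/`⨆` of Mathlib's lexicographic
  -- `CompleteLinearOrder`, not those of the `Fintype.toCompleteLinearOrder` instance above.
  let _ : CompleteLinearOrder (Tup n) := Pi.Lex.instCompleteLinearOrderLexForall
  induction A generalizing σ with
  | atom P ts => rfl
  | neg A ih => rw [feval3, fevalT, ih, Tup.toV3_tneg hn]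
  | conj A B ihA ihB => rw [feval3, fevalT, ihA, ihB, Tup.monotone_toV3.map_min]
  | disj A B ihA ihB => rw [feval3, fevalT, ihA, ihB, Tup.monotone_toV3.map_max]
  | all x A ih =>
    simp only [feval3, fevalT, ih]
    exact (Tup.monotone_toV3.map_iInf_of_wellFoundedLT _).symm
  | ex x A ih =>
    simp only [feval3, fevalT, ih]
    exact (Tup.monotone_toV3.map_iSup_of_wellFoundedGT _).symm

variable {Γ : Set (FForm Pred Const ar)} {A : FForm Pred Const ar}

theorem conseqS_of_conseqK (hn : 0 < n) (hK : ConseqK Pred Const ar Γ A) :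
    ConseqS n Pred Const ar Γ A := by
  intro D hD cv pv σ hΓ
  rw [← Tup.toV3_eq_t_iff, ← feval3_toV3 hn]
  refine hK D hD cv _ σ fun B hB => ?_
  rw [feval3_toV3 hn, hΓ B hB, Tup.toV3_tTop]

theorem conseqK_of_conseqS (hn : 2 ≤ n) (hS : ConseqS n Pred Const ar Γ A) :
    ConseqK Pred Const ar Γ A := by
  intro D hD cv pv σ hΓ
  have hpv : (fun P v => Tup.toV3 (V3.toTup n (pv P v))) = pv :=
    funext fun P => funext fun v => Tup.toV3_toTup hn _
  have hcollapse (B : FForm Pred Const ar) :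
      feval3 cv pv σ B = Tup.toV3 (fevalT cv (fun P v => V3.toTup n (pv P v)) σ B) := by
    rw [← feval3_toV3 (by omega), hpv]
  rw [hcollapse, Tup.toV3_eq_t_iff]
  exact hS D hD cv _ σ fun B hB => Tup.toV3_eq_t_iff.1 (hcollapse B ▸ hΓ B hB)

end Collapse

/-- strict `n`-tuple consequence coincides with K3 consequence. -/
theorem strict_iff_K3 (n : ℕ) (hn : 2 ≤ n) (Pred Const : Type) (ar : Pred → ℕ)
    (Γ : Set (FForm Pred Const ar)) (A : FForm Pred Const ar) :
    ConseqS n Pred Const ar Γ A ↔ ConseqK Pred Const ar Γ A :=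
  ⟨conseqK_of_conseqS hn, conseqS_of_conseqK (by omega)⟩
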